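/- There exists a constant C > 0 (independent of u and N) such that for every divergence-free Schwartz vector field u on ℝ³ and every positive integer N, with w = ∇×u, one has ∑_{j=−N}^{N} |∫_{ℝ³} ((w·∇)u)·Δ_j w dx| ≤ C ‖w‖₂² ∑_{j=−N}^{N} ‖Δ_j w‖_∞. -/

import Mathlib

open MeasureTheory Real SchwartzMap Filter
open scoped FourierTransform ENNReal NNReal

noncomputable section

abbrev R3 : Type := EuclideanSpace ℝ (Fin 3)

/-- partial derivative ∂ᵢ of a real-valued function -/
def pd (i : Fin 3) (f : R3 → ℝ) : R3 → ℝ :=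
  fun x => fderiv ℝ f x (EuclideanSpace.single i 1)

/-- partial derivative ∂ᵢ of a complex-valued function -/
def pdC (i : Fin 3) (f : R3 → ℂ) : R3 → ℂ :=
  fun x => fderiv ℝ f x (EuclideanSpace.single i 1)

def lap (f : R3 → ℝ) : R3 → ℝ := fun x => ∑ i, pd i (pd i f) x

def divg (u : R3 → R3) : R3 → ℝ := fun x => ∑ i, pd i (fun y => u y i) x

def curl3 (u : R3 → R3) : R3 → R3 := fun x =>
  WithLp.toLp 2 (![pd 1 (fun y => u y 2) x - pd 2 (fun y => u y 1) x,
     pd 2 (fun y => u y 0) x - pd 0 (fun y => u y 2) x,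
     pd 0 (fun y => u y 1) x - pd 1 (fun y => u y 0) x] : Fin 3 → ℝ)

/-- Littlewood–Paley block Δⱼ as a Fourier multiplier -/
def LPscalar (φ : R3 → ℝ) (j : ℤ) (f : R3 → ℂ) : R3 → ℂ :=
  𝓕⁻ fun ξ => ((φ ((2:ℝ)^(-j) • ξ) : ℝ) : ℂ) * 𝓕 f ξ

def LPvec (φ : R3 → ℝ) (j : ℤ) (u : R3 → R3) : R3 → EuclideanSpace ℂ (Fin 3) :=
  fun x => WithLp.toLp 2 (fun i => LPscalar φ j (fun y => ((u y i : ℝ) : ℂ)) x : Fin 3 → ℂ)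

/-- Bessel potential Λˢ = (1-Δ)^{s/2} as a Fourier multiplier -/
def Lam (s : ℝ) (f : R3 → ℂ) : R3 → ℂ :=
  𝓕⁻ fun ξ => (((1 + ‖ξ‖^2) ^ (s/2) : ℝ) : ℂ) * 𝓕 f ξ

structure LPFamily (φ : R3 → ℝ) : Prop where
  smooth : ContDiff ℝ (⊤ : ℕ∞) φ
  compSupp : HasCompactSupport φ
  nonneg : ∀ ξ, 0 ≤ φ ξ
  radial : ∀ ξ η : R3, ‖ξ‖ = ‖η‖ → φ ξ = φ η
  supp : ∀ ξ, φ ξ ≠ 0 → 3/4 ≤ ‖ξ‖ ∧ ‖ξ‖ ≤ 8/3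
  sum_one : ∀ ξ : R3, ξ ≠ 0 → HasSum (fun j : ℤ => φ ((2:ℝ)^(-j) • ξ)) 1

def L2V (u : R3 → R3) : ℝ := Real.sqrt (∫ x : R3, ‖u x‖^2)

def L2C (g : R3 → ℂ) : ℝ := Real.sqrt (∫ x : R3, ‖g x‖^2)

def HsV (s : ℝ) (u : R3 → R3) : ℝ :=
  ∑ i, L2C (Lam s (fun y => ((u y i : ℝ) : ℂ)))

def gradHsV (s : ℝ) (u : R3 → R3) : ℝ :=
  ∑ i, ∑ k, L2C (Lam s (fun y => ((pd k (fun z => u z i) y : ℝ) : ℂ)))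

def gradL2sq (u : R3 → R3) : ℝ :=
  ∫ x : R3, ∑ i, ∑ k, (pd k (fun y => u y i) x)^2

def H1V (u : R3 → R3) : ℝ := Real.sqrt ((∫ x : R3, ‖u x‖^2) + gradL2sq u)

/-- pointwise Frobenius norm of the gradient matrix -/
def gradFrob (u : R3 → R3) : R3 → ℝ :=
  fun x => Real.sqrt (∑ i, ∑ k, (pd k (fun y => u y i) x)^2)

structure IsMHD (ν η : ℝ) (I : Set ℝ) (u b : ℝ → 𝓢(R3, R3)) (p : ℝ → R3 → ℝ) : Prop where
  smooth_u : ContDiffOn ℝ (⊤ : ℕ∞) (fun q : ℝ × R3 => (u q.1 : R3 → R3) q.2) (I ×ˢ Set.univ)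
  smooth_b : ContDiffOn ℝ (⊤ : ℕ∞) (fun q : ℝ × R3 => (b q.1 : R3 → R3) q.2) (I ×ˢ Set.univ)
  smooth_p : ContDiffOn ℝ (⊤ : ℕ∞) (fun q : ℝ × R3 => p q.1 q.2) (I ×ˢ Set.univ)
  cont : ContinuousOn (fun t => (u t, b t)) I
  div_u : ∀ t ∈ I, ∀ x, divg (u t) x = 0
  div_b : ∀ t ∈ I, ∀ x, divg (b t) x = 0
  mom : ∀ t ∈ I, ∀ x : R3, ∀ i : Fin 3,
    deriv (fun τ => u τ x i) t - ν * lap (fun y => u t y i) x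
      + ∑ k, u t x k * pd k (fun y => u t y i) x
    = - pd i (p t) x - (1/2) * pd i (fun y => ‖b t y‖^2) x
      + ∑ k, b t x k * pd k (fun y => b t y i) x
  ind : ∀ t ∈ I, ∀ x : R3, ∀ i : Fin 3,
    deriv (fun τ => b τ x i) t - η * lap (fun y => b t y i) x
      + ∑ k, u t x k * pd k (fun y => b t y i) x
    = ∑ k, b t x k * pd k (fun y => u t y i) x


/- ## Auxiliary machinery for the proof -/

def ee (k : Fin 3) : R3 := EuclideanSpace.single k (1:ℝ)

lemma abs_coord_le (v : R3) (a : Fin 3) : |v a| ≤ ‖v‖ := by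
  rw [EuclideanSpace.norm_eq, ← Real.sqrt_sq_eq_abs]
  apply Real.sqrt_le_sqrt
  have h : |v a| ^ 2 = ‖v a‖ ^ 2 := by rw [Real.norm_eq_abs]
  rw [← sq_abs]
  calc |v a| ^ 2 = ‖v a‖ ^ 2 := h
    _ ≤ ∑ i, ‖v i‖ ^ 2 :=
      Finset.single_le_sum (f := fun i => ‖v i‖ ^ 2) (fun i _ => sq_nonneg _) (Finset.mem_univ a)

lemma norm_eq_sqrt_sum_sq (v : R3) : ‖v‖ = Real.sqrt (∑ i, (v i) ^ 2) := by
  rw [EuclideanSpace.norm_eq]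
  congr 1
  refine Finset.sum_congr rfl fun i _ => by rw [Real.norm_eq_abs, sq_abs]

lemma norm_sq_eq_sum_sq (v : R3) : ‖v‖ ^ 2 = ∑ i, (v i) ^ 2 := by
  rw [norm_eq_sqrt_sum_sq, Real.sq_sqrt (by positivity)]

def Du (u : 𝓢(R3, R3)) (k : Fin 3) : 𝓢(R3, R3) := LineDeriv.lineDerivOpCLM ℝ 𝓢(R3, R3) (ee k) u

lemma Du_apply (u : 𝓢(R3, R3)) (k : Fin 3) (x : R3) :
    Du u k x = fderiv ℝ (⇑u) x (ee k) := SchwartzMap.lineDerivOp_apply_eq_fderiv (ee k) u x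

lemma fderiv_coord (f : R3 → R3) (hf : Differentiable ℝ f) (a : Fin 3) (x v : R3) :
    fderiv ℝ (fun y => f y a) x v = fderiv ℝ f x v a := by
  have h : HasFDerivAt (fun y => f y a)
      ((EuclideanSpace.proj (𝕜 := ℝ) a).comp (fderiv ℝ f x)) x :=
    (EuclideanSpace.proj (𝕜 := ℝ) a).hasFDerivAt.comp x (hf x).hasFDerivAt
  rw [h.fderiv]
  rfl

lemma pd_eq_d (u : 𝓢(R3, R3)) (i k : Fin 3) (x : R3) :
    pd k (fun y => u y i) x = Du u k x i := by
  rw [Du_apply]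
  exact fderiv_coord (⇑u) u.differentiable i x (ee k)

lemma coord_cont (h : 𝓢(R3, R3)) (a : Fin 3) : Continuous (fun x => h x a) := by
  have heq : (fun x => h x a) = fun x => EuclideanSpace.proj (𝕜 := ℝ) a (h x) := rfl
  rw [heq]
  exact (EuclideanSpace.proj (𝕜 := ℝ) a).continuous.comp h.continuous

lemma coord_diff (h : 𝓢(R3, R3)) (a : Fin 3) : Differentiable ℝ (fun x => h x a) := by
  have heq : (fun x => h x a) = fun x => EuclideanSpace.proj (𝕜 := ℝ) a (h x) := rfl
  rw [heq]
  exact (EuclideanSpace.proj (𝕜 := ℝ) a).differentiable.comp h.differentiable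

lemma integ_mul (h1 h2 : 𝓢(R3, R3)) {a b : R3 → ℝ} (ha : Continuous a) (hb : Continuous b)
    (Ha : ∀ x, |a x| ≤ ‖h1 x‖) (Hb : ∀ x, |b x| ≤ ‖h2 x‖) :
    Integrable (fun x => a x * b x) (volume : Measure R3) := by
  apply Integrable.mono'
    (((h2.integrable (μ := volume)).norm).const_mul (SchwartzMap.seminorm ℝ 0 0 h1))
  · exact (ha.mul hb).aestronglyMeasurable
  · filter_upwards with x
    rw [Real.norm_eq_abs, abs_mul]
    exact mul_le_mul ((Ha x).trans (norm_le_seminorm ℝ h1 x)) (Hb x) (abs_nonneg _)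
      (apply_nonneg _ _)

lemma integ_coord_mul (h1 h2 : 𝓢(R3, R3)) (a b : Fin 3) :
    Integrable (fun x => h1 x a * h2 x b) (volume : Measure R3) :=
  integ_mul h1 h2 (coord_cont h1 a) (coord_cont h2 b)
    (fun x => abs_coord_le _ _) (fun x => abs_coord_le _ _)

lemma symm_second (u : 𝓢(R3, R3)) (i k : Fin 3) (x : R3) :
    fderiv ℝ (⇑(Du u i)) x (ee k) = fderiv ℝ (⇑(Du u k)) x (ee i) := by
  have hdiffF : Differentiable ℝ (fderiv ℝ (⇑u)) :=
    ((u.smooth ⊤).fderiv_right (m := (⊤:ℕ∞)) (by simp)).differentiable (by simp)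
  have hsymm := second_derivative_symmetric (f := ⇑u) (f' := fderiv ℝ (⇑u))
      (f'' := fderiv ℝ (fderiv ℝ (⇑u)) x)
      (fun y => (u.differentiable y).hasFDerivAt) (hdiffF x).hasFDerivAt
  have key : ∀ m v : R3, fderiv ℝ (fun y => fderiv ℝ (⇑u) y m) x v
      = fderiv ℝ (fderiv ℝ (⇑u)) x v m := by
    intro m v
    rw [fderiv_clm_apply (hdiffF x) (differentiableAt_const m)]
    simp
  have hcoe : ∀ m : Fin 3, ⇑(Du u m) = fun y => fderiv ℝ (⇑u) y (ee m) :=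
    fun m => funext (Du_apply u m)
  rw [hcoe i, hcoe k, key, key]
  exact hsymm (ee k) (ee i)

lemma div_sum_second (u : 𝓢(R3, R3)) (hdiv : ∀ x, divg ⇑u x = 0) (i : Fin 3) (x : R3) :
    ∑ k : Fin 3, fderiv ℝ (⇑(Du u i)) x (ee k) k = 0 := by
  have hswap : ∀ k : Fin 3, fderiv ℝ (⇑(Du u i)) x (ee k) k
      = fderiv ℝ (fun y => (Du u k) y k) x (ee i) := by
    intro k
    rw [symm_second u i k x, fderiv_coord (⇑(Du u k)) (Du u k).differentiable k x (ee i)]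
  simp only [hswap]
  have hsum : ∑ k : Fin 3, fderiv ℝ (fun y => (Du u k) y k) x (ee i)
      = fderiv ℝ (fun y => ∑ k : Fin 3, (Du u k) y k) x (ee i) := by
    rw [fderiv_fun_sum (fun k _ => (coord_diff (Du u k) k) x)]
    simp
  rw [hsum]
  have hzero : (fun y => ∑ k : Fin 3, (Du u k) y k) = fun _ => (0 : ℝ) := by
    funext y
    have h := hdiv y
    unfold divg at h
    simp only [pd_eq_d] at h
    exact h
  rw [hzero, fderiv_fun_const]
  simp

lemma ibp_single (u : 𝓢(R3, R3)) (i k : Fin 3) :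
    ∫ x : R3, (Du u k x i) * (Du u i x k)
      = - ∫ x : R3, (u x i) * (fderiv ℝ (⇑(Du u i)) x (ee k) k) := by
  have hgdiff : Differentiable ℝ (fun x => (Du u i) x k) := coord_diff (Du u i) k
  have hfd : Differentiable ℝ (fun x => (u : R3 → R3) x i) := coord_diff u i
  have e1 : ∀ x : R3, fderiv ℝ (fun y => (u : R3 → R3) y i) x (ee k) = Du u k x i := by
    intro x
    rw [fderiv_coord (⇑u) u.differentiable i x (ee k), Du_apply]
  have e2 : ∀ x : R3, fderiv ℝ (fun y => (Du u i) y k) x (ee k)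
      = fderiv ℝ (⇑(Du u i)) x (ee k) k := by
    intro x
    exact fderiv_coord (⇑(Du u i)) (Du u i).differentiable k x (ee k)
  have hDD : ∀ x : R3, fderiv ℝ (⇑(Du u i)) x (ee k) k = (Du (Du u i) k) x k := by
    intro x; rw [Du_apply]
  have h1 : Integrable (fun x => fderiv ℝ (fun y => (u : R3 → R3) y i) x (ee k)
      * (Du u i) x k) (volume : Measure R3) := by
    have heq : (fun x => fderiv ℝ (fun y => (u : R3 → R3) y i) x (ee k) * (Du u i) x k)
        = fun x => Du u k x i * Du u i x k := by
      funext x; rw [e1]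
    rw [heq]; exact integ_coord_mul (Du u k) (Du u i) i k
  have h2 : Integrable (fun x => (u : R3 → R3) x i
      * fderiv ℝ (fun y => (Du u i) y k) x (ee k)) (volume : Measure R3) := by
    have heq : (fun x => (u : R3 → R3) x i * fderiv ℝ (fun y => (Du u i) y k) x (ee k))
        = fun x => u x i * (Du (Du u i) k) x k := by
      funext x; rw [e2 x, hDD]
    rw [heq]; exact integ_coord_mul u (Du (Du u i) k) i k
  have h3 : Integrable (fun x => (u : R3 → R3) x i * (Du u i) x k)
      (volume : Measure R3) := integ_coord_mul u (Du u i) i k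
  have hmain := integral_mul_fderiv_eq_neg_fderiv_mul_of_integrable
    (μ := (volume : Measure R3)) (f := fun x => (u : R3 → R3) x i)
    (g := fun x => (Du u i) x k) (v := ee k) h1 h2 h3 (fun x _ => hfd x) (fun x _ => hgdiff x)
  have lhs_eq : ∫ x : R3, (u : R3 → R3) x i * fderiv ℝ (fun y => (Du u i) y k) x (ee k)
      = ∫ x : R3, (u x i) * (fderiv ℝ (⇑(Du u i)) x (ee k) k) :=
    integral_congr_ae (Filter.Eventually.of_forall fun x => by simp only [e2])
  have rhs_eq : ∫ x : R3, fderiv ℝ (fun y => (u : R3 → R3) y i) x (ee k) * (Du u i) x k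
      = ∫ x : R3, (Du u k x i) * (Du u i x k) :=
    integral_congr_ae (Filter.Eventually.of_forall fun x => by simp only [e1])
  rw [lhs_eq, rhs_eq] at hmain
  linarith [hmain]

lemma ibp_sum (u : 𝓢(R3, R3)) (hdiv : ∀ x, divg ⇑u x = 0) (i : Fin 3) :
    ∑ k : Fin 3, ∫ x : R3, (Du u k x i) * (Du u i x k) = 0 := by
  have hint : ∀ k : Fin 3,
      Integrable (fun x => (u : R3 → R3) x i * fderiv ℝ (⇑(Du u i)) x (ee k) k)
        (volume : Measure R3) := by
    intro k
    have heq : (fun x => (u : R3 → R3) x i * fderiv ℝ (⇑(Du u i)) x (ee k) k)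
        = fun x => u x i * (Du (Du u i) k) x k := by
      funext x; rw [Du_apply]
    rw [heq]; exact integ_coord_mul u (Du (Du u i) k) i k
  calc ∑ k : Fin 3, ∫ x : R3, (Du u k x i) * (Du u i x k)
      = ∑ k : Fin 3, - ∫ x : R3, (u x i) * (fderiv ℝ (⇑(Du u i)) x (ee k) k) :=
        Finset.sum_congr rfl (fun k _ => ibp_single u i k)
    _ = - ∑ k : Fin 3, ∫ x : R3, (u x i) * (fderiv ℝ (⇑(Du u i)) x (ee k) k) := by
        rw [← Finset.sum_neg_distrib]
    _ = - ∫ x : R3, ∑ k : Fin 3, (u x i) * (fderiv ℝ (⇑(Du u i)) x (ee k) k) := by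
        rw [integral_finset_sum _ (fun k _ => hint k)]
    _ = - ∫ x : R3, (u x i) * 0 := by
        congr 1
        refine integral_congr_ae (Filter.Eventually.of_forall fun x => ?_)
        simp only [← Finset.mul_sum]
        rw [div_sum_second u hdiv i x]
    _ = 0 := by simp

lemma G2_integrable (u : 𝓢(R3, R3)) :
    Integrable (fun x : R3 => ∑ i, ∑ k, (Du u k x i)^2) volume := by
  have h : (fun x : R3 => ∑ i, ∑ k, (Du u k x i)^2)
      = fun x => ∑ i : Fin 3, ∑ k : Fin 3, (Du u k x i * Du u k x i) := by
    funext x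
    exact Finset.sum_congr rfl fun i _ => Finset.sum_congr rfl fun k _ => pow_two _
  rw [h]
  exact integrable_finset_sum _ fun i _ =>
    integrable_finset_sum _ fun k _ => integ_coord_mul (Du u k) (Du u k) i i

lemma S_integrable (u : 𝓢(R3, R3)) :
    Integrable (fun x : R3 => ∑ i, ∑ k, Du u k x i * Du u i x k) volume :=
  integrable_finset_sum _ fun i _ =>
    integrable_finset_sum _ fun k _ => integ_coord_mul _ _ _ _

lemma curl_pt (u : 𝓢(R3, R3)) (x : R3) : ‖curl3 ⇑u x‖^2
    = (∑ i, ∑ k, (Du u k x i)^2) - (∑ i, ∑ k, Du u k x i * Du u i x k) := by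
  rw [norm_sq_eq_sum_sq]
  simp only [curl3, pd_eq_d, Fin.sum_univ_three, Matrix.cons_val_zero, Matrix.cons_val_one,
    Matrix.head_cons, Matrix.cons_val_two, Matrix.tail_cons, PiLp.toLp_apply]
  ring

lemma w2_integrable (u : 𝓢(R3, R3)) :
    Integrable (fun x : R3 => ‖curl3 ⇑u x‖^2) volume := by
  have h : (fun x : R3 => ‖curl3 ⇑u x‖^2)
      = fun x => (∑ i, ∑ k, (Du u k x i)^2) - (∑ i, ∑ k, Du u k x i * Du u i x k) :=
    funext fun x => curl_pt u x
  rw [h]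
  exact (G2_integrable u).sub (S_integrable u)

lemma grad_sq_integral_eq (u : 𝓢(R3, R3)) (hdiv : ∀ x, divg ⇑u x = 0) :
    ∫ x : R3, (∑ i, ∑ k, (Du u k x i)^2) = ∫ x : R3, ‖curl3 ⇑u x‖^2 := by
  have hSzero : ∫ x : R3, (∑ i, ∑ k, Du u k x i * Du u i x k) = 0 := by
    rw [integral_finset_sum Finset.univ
      (f := fun (i : Fin 3) (x : R3) => ∑ k, Du u k x i * Du u i x k)
      (fun i _ => integrable_finset_sum _ fun k _ => integ_coord_mul _ _ _ _)]
    refine Finset.sum_eq_zero fun i _ => ?_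
    rw [integral_finset_sum Finset.univ
      (f := fun (k : Fin 3) (x : R3) => Du u k x i * Du u i x k)
      (fun k _ => integ_coord_mul _ _ _ _)]
    exact ibp_sum u hdiv i
  have h2 : ∫ x : R3, ‖curl3 ⇑u x‖^2
      = ∫ x : R3, ((∑ i, ∑ k, (Du u k x i)^2) - (∑ i, ∑ k, Du u k x i * Du u i x k)) :=
    integral_congr_ae (Filter.Eventually.of_forall fun x => curl_pt u x)
  rw [h2, integral_sub (G2_integrable u) (S_integrable u), hSzero, sub_zero]

lemma cs_sqrt (f g : Fin 3 → ℝ) (hf : ∀ i, 0 ≤ f i) (hg : ∀ i, 0 ≤ g i) :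
    ∑ i, f i * g i ≤ Real.sqrt (∑ i, (f i)^2) * Real.sqrt (∑ i, (g i)^2) := by
  have h := Finset.sum_mul_sq_le_sq_mul_sq Finset.univ f g
  have h0 : 0 ≤ ∑ i, f i * g i := Finset.sum_nonneg fun i _ => mul_nonneg (hf i) (hg i)
  calc ∑ i, f i * g i = Real.sqrt ((∑ i, f i * g i)^2) := (Real.sqrt_sq h0).symm
    _ ≤ Real.sqrt ((∑ i, (f i)^2) * (∑ i, (g i)^2)) := Real.sqrt_le_sqrt h
    _ = _ := Real.sqrt_mul (Finset.sum_nonneg fun i _ => sq_nonneg _) _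

lemma eLpNorm_two_sq (f : R3 → R3) :
    (eLpNorm f 2 (volume : Measure R3))^2 = ∫⁻ x : R3, (‖f x‖₊ : ℝ≥0∞) ^ (2:ℝ) := by
  rw [eLpNorm_eq_lintegral_rpow_enorm_toReal (by norm_num) (by norm_num)]
  rw [show ((2:ℝ≥0∞).toReal) = (2:ℝ) by simp]
  rw [← ENNReal.rpow_natCast _ 2, ← ENNReal.rpow_mul]
  norm_num
  rfl

lemma key_est (u : 𝓢(R3, R3)) (hdiv : ∀ x, divg ⇑u x = 0) (V : R3 → EuclideanSpace ℂ (Fin 3)) :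
    (‖∫ x : R3, ∑ i,
        ((∑ k, curl3 ⇑u x k * pd k (fun y => u y i) x : ℝ) : ℂ) * V x i‖₊ : ℝ≥0∞)
      ≤ (eLpNorm (curl3 ⇑u) 2 volume) ^ 2 * eLpNorm V ⊤ volume := by
  have hG2nonneg : ∀ x : R3, 0 ≤ ∑ i, ∑ k, (Du u k x i)^2 :=
    fun x => Finset.sum_nonneg fun i _ => Finset.sum_nonneg fun k _ => sq_nonneg _
  -- continuity facts
  have hwk : ∀ m : Fin 3, Continuous (fun x => curl3 ⇑u x m) := by
    intro m
    fin_cases m <;>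
      · simp only [curl3, pd_eq_d, Matrix.cons_val_zero, Matrix.cons_val_one,
          Matrix.head_cons, Matrix.cons_val_two, Matrix.tail_cons, Fin.isValue, PiLp.toLp_apply]
        exact (coord_cont _ _).sub (coord_cont _ _)
  have hwn : Continuous (fun x => ‖curl3 ⇑u x‖) := by
    have h : (fun x => ‖curl3 ⇑u x‖) = fun x => Real.sqrt (∑ m, (curl3 ⇑u x m)^2) :=
      funext fun x => norm_eq_sqrt_sum_sq _
    rw [h]
    exact Real.continuous_sqrt.comp (continuous_finset_sum _ fun m _ => (hwk m).pow 2)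
  have hG2cont : Continuous (fun x : R3 => ∑ i, ∑ k, (Du u k x i)^2) :=
    continuous_finset_sum _ fun i _ =>
      continuous_finset_sum _ fun k _ => ((coord_cont (Du u k) i).pow 2)
  -- pointwise bound
  have hpt : ∀ x : R3, ‖∑ i, ((∑ k, curl3 ⇑u x k * pd k (fun y => u y i) x : ℝ) : ℂ) * V x i‖
      ≤ (‖curl3 ⇑u x‖ * Real.sqrt (∑ i, ∑ k, (Du u k x i)^2)) * ‖V x‖ := by
    intro x
    set c : Fin 3 → ℝ := fun i => ∑ k, curl3 ⇑u x k * pd k (fun y => u y i) x with hc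
    have step1 : ‖∑ i, (c i : ℂ) * V x i‖ ≤ ∑ i, |c i| * ‖V x i‖ := by
      refine (norm_sum_le _ _).trans ?_
      refine Finset.sum_le_sum fun i _ => ?_
      rw [norm_mul, Complex.norm_real, Real.norm_eq_abs]
    have step2 : ∑ i, |c i| * ‖V x i‖
        ≤ Real.sqrt (∑ i, |c i|^2) * Real.sqrt (∑ i, ‖V x i‖^2) :=
      cs_sqrt _ _ (fun i => abs_nonneg _) (fun i => norm_nonneg _)
    have step3 : Real.sqrt (∑ i, ‖V x i‖^2) = ‖V x‖ := (EuclideanSpace.norm_eq (V x)).symm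
    have step4 : Real.sqrt (∑ i, |c i|^2)
        ≤ ‖curl3 ⇑u x‖ * Real.sqrt (∑ i, ∑ k, (Du u k x i)^2) := by
      have hci : ∀ i, (c i)^2 ≤ (∑ k, (curl3 ⇑u x k)^2) * (∑ k, (Du u k x i)^2) := by
        intro i
        have h := Finset.sum_mul_sq_le_sq_mul_sq Finset.univ
          (fun k => curl3 ⇑u x k) (fun k => Du u k x i)
        have hceq : c i = ∑ k, curl3 ⇑u x k * Du u k x i := by
          rw [hc]; exact Finset.sum_congr rfl fun k _ => by rw [pd_eq_d]
        rw [hceq]; exact h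
      have hsum : ∑ i, |c i|^2 ≤ ‖curl3 ⇑u x‖^2 * (∑ i, ∑ k, (Du u k x i)^2) := by
        rw [norm_sq_eq_sum_sq]
        calc ∑ i, |c i|^2 = ∑ i, (c i)^2 := by simp [sq_abs]
          _ ≤ ∑ i : Fin 3, ((∑ k, (curl3 ⇑u x k)^2) * (∑ k, (Du u k x i)^2)) :=
              Finset.sum_le_sum fun i _ => hci i
          _ = (∑ k, (curl3 ⇑u x k)^2) * (∑ i, ∑ k, (Du u k x i)^2) := by
              rw [← Finset.mul_sum]
      calc Real.sqrt (∑ i, |c i|^2)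
          ≤ Real.sqrt (‖curl3 ⇑u x‖^2 * (∑ i, ∑ k, (Du u k x i)^2)) := Real.sqrt_le_sqrt hsum
        _ = ‖curl3 ⇑u x‖ * Real.sqrt (∑ i, ∑ k, (Du u k x i)^2) := by
            rw [Real.sqrt_mul (sq_nonneg _), Real.sqrt_sq (norm_nonneg _)]
    calc ‖∑ i, (c i : ℂ) * V x i‖ ≤ ∑ i, |c i| * ‖V x i‖ := step1
      _ ≤ Real.sqrt (∑ i, |c i|^2) * Real.sqrt (∑ i, ‖V x i‖^2) := step2
      _ = Real.sqrt (∑ i, |c i|^2) * ‖V x‖ := by rw [step3]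
      _ ≤ _ := mul_le_mul_of_nonneg_right step4 (norm_nonneg _)
  -- the main lintegral bound
  have hmain : ∫⁻ x : R3, ENNReal.ofReal (‖curl3 ⇑u x‖ * Real.sqrt (∑ i, ∑ k, (Du u k x i)^2))
      ≤ (eLpNorm (curl3 ⇑u) 2 volume)^2 := by
    have hf : AEMeasurable (fun x : R3 => ENNReal.ofReal ‖curl3 ⇑u x‖) volume :=
      (ENNReal.continuous_ofReal.comp hwn).measurable.aemeasurable
    have hg : AEMeasurable
        (fun x : R3 => ENNReal.ofReal (Real.sqrt (∑ i, ∑ k, (Du u k x i)^2))) volume :=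
      (ENNReal.continuous_ofReal.comp (Real.continuous_sqrt.comp hG2cont)).measurable.aemeasurable
    have hhold := ENNReal.lintegral_mul_le_Lp_mul_Lq (volume : Measure R3)
      (p := 2) (q := 2) Real.HolderConjugate.two_two hf hg
    have hfw : ∫⁻ x : R3, (ENNReal.ofReal ‖curl3 ⇑u x‖) ^ (2:ℝ)
        = (eLpNorm (curl3 ⇑u) 2 volume)^2 := by
      rw [eLpNorm_two_sq]
      exact lintegral_congr fun x => by rw [ofReal_norm, enorm_eq_nnnorm]
    have hfg : ∫⁻ x : R3, (ENNReal.ofReal (Real.sqrt (∑ i, ∑ k, (Du u k x i)^2))) ^ (2:ℝ)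
        = (eLpNorm (curl3 ⇑u) 2 volume)^2 := by
      have e1 : ∀ x : R3, (ENNReal.ofReal (Real.sqrt (∑ i, ∑ k, (Du u k x i)^2))) ^ (2:ℝ)
          = ENNReal.ofReal (∑ i, ∑ k, (Du u k x i)^2) := by
        intro x
        rw [ENNReal.ofReal_rpow_of_nonneg (Real.sqrt_nonneg _) (by norm_num)]
        congr 1
        rw [show ((2:ℝ)) = (((2:ℕ)):ℝ) by norm_num, Real.rpow_natCast]
        exact Real.sq_sqrt (hG2nonneg x)
      rw [lintegral_congr e1,
        ← ofReal_integral_eq_lintegral_ofReal (G2_integrable u)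
          (Filter.Eventually.of_forall hG2nonneg),
        grad_sq_integral_eq u hdiv,
        ofReal_integral_eq_lintegral_ofReal (w2_integrable u)
          (Filter.Eventually.of_forall fun x => sq_nonneg _),
        eLpNorm_two_sq]
      refine lintegral_congr fun x => ?_
      rw [← enorm_eq_nnnorm, ← ofReal_norm,
        show ((2:ℝ)) = (((2:ℕ)):ℝ) by norm_num, ENNReal.rpow_natCast,
        ← ENNReal.ofReal_pow (norm_nonneg _)]
    have hsplit : (fun x : R3 =>
          ENNReal.ofReal (‖curl3 ⇑u x‖ * Real.sqrt (∑ i, ∑ k, (Du u k x i)^2)))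
        = fun x => ENNReal.ofReal ‖curl3 ⇑u x‖
            * ENNReal.ofReal (Real.sqrt (∑ i, ∑ k, (Du u k x i)^2)) :=
      funext fun x => ENNReal.ofReal_mul (norm_nonneg _)
    calc ∫⁻ x : R3, ENNReal.ofReal (‖curl3 ⇑u x‖ * Real.sqrt (∑ i, ∑ k, (Du u k x i)^2))
        = ∫⁻ x : R3, ENNReal.ofReal ‖curl3 ⇑u x‖
            * ENNReal.ofReal (Real.sqrt (∑ i, ∑ k, (Du u k x i)^2)) := by rw [hsplit]
      _ ≤ (∫⁻ x : R3, (ENNReal.ofReal ‖curl3 ⇑u x‖) ^ (2:ℝ)) ^ (1/(2:ℝ))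
            * (∫⁻ x : R3,
                (ENNReal.ofReal (Real.sqrt (∑ i, ∑ k, (Du u k x i)^2))) ^ (2:ℝ)) ^ (1/(2:ℝ)) :=
          hhold
      _ = ((eLpNorm (curl3 ⇑u) 2 volume)^2) ^ (1/(2:ℝ))
            * ((eLpNorm (curl3 ⇑u) 2 volume)^2) ^ (1/(2:ℝ)) := by rw [hfw, hfg]
      _ = (eLpNorm (curl3 ⇑u) 2 volume)^2 := by
          rw [← ENNReal.rpow_add_of_nonneg _ _ (by norm_num) (by norm_num)]
          norm_num
  -- assemble
  calc (‖∫ x : R3, ∑ i,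
        ((∑ k, curl3 ⇑u x k * pd k (fun y => u y i) x : ℝ) : ℂ) * V x i‖₊ : ℝ≥0∞)
      ≤ ∫⁻ x : R3, ‖∑ i,
          ((∑ k, curl3 ⇑u x k * pd k (fun y => u y i) x : ℝ) : ℂ) * V x i‖₊ :=
        enorm_integral_le_lintegral_enorm _
    _ ≤ ∫⁻ x : R3, ENNReal.ofReal (‖curl3 ⇑u x‖ * Real.sqrt (∑ i, ∑ k, (Du u k x i)^2))
          * (‖V x‖₊ : ℝ≥0∞) := by
        refine lintegral_mono fun x => ?_
        calc (‖∑ i, ((∑ k, curl3 ⇑u x k * pd k (fun y => u y i) x : ℝ) : ℂ) * V x i‖₊ : ℝ≥0∞)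
            = ENNReal.ofReal
                ‖∑ i, ((∑ k, curl3 ⇑u x k * pd k (fun y => u y i) x : ℝ) : ℂ) * V x i‖ :=
              (ofReal_norm _).symm
          _ ≤ ENNReal.ofReal ((‖curl3 ⇑u x‖ * Real.sqrt (∑ i, ∑ k, (Du u k x i)^2)) * ‖V x‖) :=
              ENNReal.ofReal_le_ofReal (hpt x)
          _ = ENNReal.ofReal (‖curl3 ⇑u x‖ * Real.sqrt (∑ i, ∑ k, (Du u k x i)^2))
                * ENNReal.ofReal ‖V x‖ :=
              ENNReal.ofReal_mul (mul_nonneg (norm_nonneg _) (Real.sqrt_nonneg _))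
          _ = _ := by rw [ofReal_norm, enorm_eq_nnnorm]
    _ ≤ (∫⁻ x : R3, ENNReal.ofReal (‖curl3 ⇑u x‖ * Real.sqrt (∑ i, ∑ k, (Du u k x i)^2)))
          * eLpNorm V ⊤ volume := by
        rw [eLpNorm_exponent_top, eLpNormEssSup]
        calc ∫⁻ x : R3, ENNReal.ofReal (‖curl3 ⇑u x‖ * Real.sqrt (∑ i, ∑ k, (Du u k x i)^2))
              * (‖V x‖₊ : ℝ≥0∞)
            ≤ ∫⁻ x : R3, ENNReal.ofReal (‖curl3 ⇑u x‖ * Real.sqrt (∑ i, ∑ k, (Du u k x i)^2))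
              * essSup (fun x => (‖V x‖₊ : ℝ≥0∞)) volume := by
              refine lintegral_mono_ae ?_
              filter_upwards [ae_le_essSup (f := fun x : R3 => (‖V x‖₊ : ℝ≥0∞))] with x hx
              exact mul_le_mul_right hx _
          _ = _ := lintegral_mul_const'' _
              ((ENNReal.continuous_ofReal.comp
                (hwn.mul (Real.continuous_sqrt.comp hG2cont))).measurable.aemeasurable)
    _ ≤ (eLpNorm (curl3 ⇑u) 2 volume)^2 * eLpNorm V ⊤ volume :=
        mul_le_mul_left hmain _

theorem middle_frequency_estimate :
    ∀ (φ : R3 → ℝ), LPFamily φ →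
    ∃ C : ℝ, 0 < C ∧
    ∀ (u : 𝓢(R3, R3)), (∀ x, divg ⇑u x = 0) →
    ∀ N : ℕ, 0 < N →
      (∑ j ∈ Finset.Icc (-(N : ℤ)) (N : ℤ),
          (‖∫ x : R3, ∑ i,
              ((∑ k, curl3 ⇑u x k * pd k (fun y => u y i) x : ℝ) : ℂ)
                * LPvec φ j (curl3 ⇑u) x i‖₊ : ℝ≥0∞))
        ≤ ENNReal.ofReal C * (eLpNorm (curl3 ⇑u) 2 volume) ^ 2
            * ∑ j ∈ Finset.Icc (-(N : ℤ)) (N : ℤ),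
                eLpNorm (LPvec φ j (curl3 ⇑u)) ⊤ volume := by
  intro φ _
  refine ⟨1, one_pos, ?_⟩
  intro u hdiv N _
  calc (∑ j ∈ Finset.Icc (-(N : ℤ)) (N : ℤ),
        (‖∫ x : R3, ∑ i,
            ((∑ k, curl3 ⇑u x k * pd k (fun y => u y i) x : ℝ) : ℂ)
              * LPvec φ j (curl3 ⇑u) x i‖₊ : ℝ≥0∞))
      ≤ ∑ j ∈ Finset.Icc (-(N : ℤ)) (N : ℤ),
          (eLpNorm (curl3 ⇑u) 2 volume) ^ 2 * eLpNorm (LPvec φ j (curl3 ⇑u)) ⊤ volume :=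
        Finset.sum_le_sum fun j _ => key_est u hdiv (LPvec φ j (curl3 ⇑u))
    _ = (eLpNorm (curl3 ⇑u) 2 volume) ^ 2
          * ∑ j ∈ Finset.Icc (-(N : ℤ)) (N : ℤ),
              eLpNorm (LPvec φ j (curl3 ⇑u)) ⊤ volume := by rw [← Finset.mul_sum]
    _ = ENNReal.ofReal 1 * (eLpNorm (curl3 ⇑u) 2 volume) ^ 2
          * ∑ j ∈ Finset.Icc (-(N : ℤ)) (N : ℤ),
              eLpNorm (LPvec φ j (curl3 ⇑u)) ⊤ volume := by
        rw [ENNReal.ofReal_one, one_mul]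

end
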